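/- For every positive integer s, every positive integer k, and every integer m ≥ s·k, Duplicator wins the game ehr[T_1^{(s,k,m)}, T_2^{(s,k,m)}, s; k] in which Spoiler starts playing on T_1^{(s,k,m)}. -/

import Mathlib

/-! ## Rooted trees -/

/-- A rooted tree structure: a vertex type, a root, and a parent map
(`parent v = none` is intended to hold exactly when `v` is the root). -/
structure RTree where
  V : Type
  root : V
  parent : V → Option V

namespace RTree

/-- Iterate the parent map `n` times. -/
def parentIter (T : RTree) : ℕ → T.V → Option T.V
  | 0, v => some v
  | n + 1, v => (T.parent v).bind (T.parentIter n)

/-- `u` is a descendant of `v` (possibly `u = v`). -/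
def IsDesc (T : RTree) (v u : T.V) : Prop :=
  ∃ n, T.parentIter n u = some v

/-- The structure is a genuine rooted, locally finite tree:
exactly the root has no parent, every vertex reaches the root by iterating
the parent map (connectivity and acyclicity), and every vertex has finitely
many children (local finiteness). -/
def IsTree (T : RTree) : Prop :=
  (∀ v, T.parent v = none ↔ v = T.root) ∧
  (∀ v, ∃ n, T.parentIter n v = some T.root) ∧
  (∀ v, {u | T.parent u = some v}.Finite)

open Classical in
/-- The subtree `T(v)` consisting of `v` and all its descendants, rooted at `v`. -/
noncomputable def subtree (T : RTree) (v : T.V) : RTree where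
  V := {u : T.V // T.IsDesc v u}
  root := ⟨v, 0, rfl⟩
  parent u :=
    if u.1 = v then none
    else (T.parent u.1).bind fun w =>
      if h : T.IsDesc v w then some ⟨w, h⟩ else none

end RTree

/-- An isomorphism of rooted trees: a bijection of vertices mapping root to
root and commuting with the parent maps. -/
structure TreeIso (S T : RTree) where
  toEquiv : S.V ≃ T.V
  map_root : toEquiv S.root = T.root
  map_parent : ∀ v, (S.parent v).map toEquiv = T.parent (toEquiv v)

/-! ## First-order logic of rooted trees -/

/-- Terms: variables (de Bruijn indices) and the constant `R` for the root. -/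
inductive FOTerm where
  | var : ℕ → FOTerm
  | root : FOTerm
deriving DecidableEq

/-- First-order formulas in the language of rooted trees: equality `x = y`,
the parent relation `parentOf t t'` (meaning `π(t') = t`, i.e. `t` is the
parent of `t'`), Boolean connectives, and quantifiers (de Bruijn style). -/
inductive FOFormula where
  | eq : FOTerm → FOTerm → FOFormula
  | parentOf : FOTerm → FOTerm → FOFormula
  | not : FOFormula → FOFormula
  | and : FOFormula → FOFormula → FOFormula
  | or : FOFormula → FOFormula → FOFormula
  | imp : FOFormula → FOFormula → FOFormula
  | all : FOFormula → FOFormula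
  | ex : FOFormula → FOFormula
deriving DecidableEq

namespace FOTerm

def eval (T : RTree) (env : ℕ → T.V) : FOTerm → T.V
  | var n => env n
  | root => T.root

def freeBound : FOTerm → ℕ
  | var n => n + 1
  | root => 0

end FOTerm

/-- Kinds of quantifiers, used to count alternations. -/
inductive QKind where
  | ex | all
deriving DecidableEq

/-- The dual of a quantifier kind. -/
def QKind.dual : QKind → QKind
  | .ex => .all
  | .all => .ex

namespace FOFormula

/-- Satisfaction of a formula in a rooted tree under an environment. -/
def Sat (T : RTree) : FOFormula → (ℕ → T.V) → Prop
  | eq t₁ t₂, env => t₁.eval T env = t₂.eval T env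
  | parentOf t₁ t₂, env => T.parent (t₂.eval T env) = some (t₁.eval T env)
  | not φ, env => ¬ φ.Sat T env
  | and φ ψ, env => φ.Sat T env ∧ ψ.Sat T env
  | or φ ψ, env => φ.Sat T env ∨ ψ.Sat T env
  | imp φ ψ, env => φ.Sat T env → ψ.Sat T env
  | all φ, env => ∀ w : T.V, φ.Sat T (fun n => match n with | 0 => w | Nat.succ k => env k)
  | ex φ, env => ∃ w : T.V, φ.Sat T (fun n => match n with | 0 => w | Nat.succ k => env k)

/-- Quantifier depth: the maximum number of nested quantifiers. -/
def qd : FOFormula → ℕ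
  | eq _ _ => 0
  | parentOf _ _ => 0
  | not φ => φ.qd
  | and φ ψ => max φ.qd ψ.qd
  | or φ ψ => max φ.qd ψ.qd
  | imp φ ψ => max φ.qd ψ.qd
  | all φ => φ.qd + 1
  | ex φ => φ.qd + 1

/-- Auxiliary alternation count: `aqdAux φ pol q` is the maximum number of
alternations between (effectively) existential and universal quantifiers along
a nested quantifier sequence of `φ`, given the current polarity `pol`
(`true` = positive; negations and antecedents of implications flip it, so that
e.g. a `∀` under a negation counts as an `∃`) and the effective kind `q` of
the innermost enclosing quantifier (if any). -/
def aqdAux : FOFormula → Bool → Option QKind → ℕ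
  | eq _ _, _, _ => 0
  | parentOf _ _, _, _ => 0
  | not φ, pol, q => φ.aqdAux (!pol) q
  | and φ ψ, pol, q => max (φ.aqdAux pol q) (ψ.aqdAux pol q)
  | or φ ψ, pol, q => max (φ.aqdAux pol q) (ψ.aqdAux pol q)
  | imp φ ψ, pol, q => max (φ.aqdAux (!pol) q) (ψ.aqdAux pol q)
  | all φ, pol, q =>
      (if q = some (if pol then QKind.ex else QKind.all) then 1 else 0) +
        φ.aqdAux pol (some (if pol then QKind.all else QKind.ex))
  | ex φ, pol, q =>
      (if q = some (if pol then QKind.all else QKind.ex) then 1 else 0) +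
        φ.aqdAux pol (some (if pol then QKind.ex else QKind.all))

/-- The number of alternations of quantifiers of a formula: the maximum number
of switches between (effectively) existential and universal quantifiers in a
nested quantifier sequence.  Purely existential or purely universal formulas
have `aqd = 0`. -/
def aqd (φ : FOFormula) : ℕ := φ.aqdAux true none

/-- A bound on the free variables of a formula: all free de Bruijn indices
are `< freeBound`. -/
def freeBound : FOFormula → ℕ
  | eq t₁ t₂ => max t₁.freeBound t₂.freeBound
  | parentOf t₁ t₂ => max t₁.freeBound t₂.freeBound
  | not φ => φ.freeBound
  | and φ ψ => max φ.freeBound ψ.freeBound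
  | or φ ψ => max φ.freeBound ψ.freeBound
  | imp φ ψ => max φ.freeBound ψ.freeBound
  | all φ => φ.freeBound - 1
  | ex φ => φ.freeBound - 1

/-- A sentence is a formula with no free variables. -/
def IsSentence (φ : FOFormula) : Prop := φ.freeBound = 0

end FOFormula

/-- A (closed) formula holds in a rooted tree. -/
def Models (T : RTree) (φ : FOFormula) : Prop :=
  φ.Sat T (fun _ => T.root)

/-- The formula `P_i(x)`, with free variable `x` being de Bruijn index `0`:
`P_0(x) = ∀ y ¬(π(y) = x)` and `P_{i+1}(x) = ∀ y (π(y) = x → ¬ P_i(y))`. -/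
def Pform : ℕ → FOFormula
  | 0 => .all (.not (.parentOf (.var 1) (.var 0)))
  | i + 1 => .all (.imp (.parentOf (.var 1) (.var 0)) (.not (Pform i)))

/-- The sentence `KEIN_i = P_i(R)`. -/
def KEIN : ℕ → FOFormula
  | 0 => .all (.not (.parentOf .root (.var 0)))
  | i + 1 => .all (.imp (.parentOf .root (.var 0)) (.not (Pform i)))

/-! ## Ehrenfeucht games -/

/-- The winning condition for Duplicator: for all pairs `(x_i, y_i)`, `(x_j, y_j)`
in the list of selected/designated pairs, (Main 1) `π(x_j) = x_i ↔ π(y_j) = y_i`,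
and (Main 2) `x_i = x_j ↔ y_i = y_j`. -/
def GoodPairs (T₁ T₂ : RTree) (ps : List (T₁.V × T₂.V)) : Prop :=
  ∀ p ∈ ps, ∀ q ∈ ps,
    (T₁.parent p.1 = some q.1 ↔ T₂.parent p.2 = some q.2) ∧
    (p.1 = q.1 ↔ p.2 = q.2)

/-- Duplicator wins the scheduled Ehrenfeucht game on `T₁, T₂` in which Spoiler
must play his moves in consecutive batches, the batch sizes given by the list
`sched`, switching trees after each batch; `side = true` means Spoiler currently
plays on `T₁` (Duplicator answering on `T₂`), `side = false` means Spoiler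
currently plays on `T₂`.  The list `ps` records the pairs selected so far
(including designated pairs and the pair of roots); Duplicator wins when the
final configuration satisfies `GoodPairs`. -/
def DupWinsSched (T₁ T₂ : RTree) : List ℕ → Bool → List (T₁.V × T₂.V) → Prop
  | [], _, ps => GoodPairs T₁ T₂ ps
  | 0 :: rest, side, ps => DupWinsSched T₁ T₂ rest (!side) ps
  | (n + 1) :: rest, side, ps =>
      if side then
        ∀ x : T₁.V, ∃ y : T₂.V, DupWinsSched T₁ T₂ (n :: rest) side ((x, y) :: ps)
      else
        ∀ y : T₂.V, ∃ x : T₁.V, DupWinsSched T₁ T₂ (n :: rest) side ((x, y) :: ps)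
termination_by sched _ _ => (sched.length, sched.sum)
decreasing_by
  all_goals
    first
      | exact Prod.Lex.left _ _ (Nat.lt_succ_self _)
      | exact Prod.Lex.right _ (by simp [List.sum_cons])

/-- The cost (in switches) for Spoiler of playing on side `side` when his
previous move (if any) was on side `last`. -/
def switchCost (last : Option Bool) (side : Bool) : ℕ :=
  match last with
  | none => 0
  | some b => if b = side then 0 else 1

/-- Duplicator wins the Ehrenfeucht game `EHR` with `rounds` remaining rounds,
`sw` remaining switches allowed to Spoiler, `last` the side on which Spoiler
made his previous move (if any), and `ps` the pairs selected so far.  In each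
round Spoiler picks a side (paying a switch if he changes trees, which he may
do only if he has switches left) and a vertex in that tree, and Duplicator
answers in the other tree. -/
def DupWinsEHRAux (T₁ T₂ : RTree) :
    ℕ → ℕ → Option Bool → List (T₁.V × T₂.V) → Prop
  | 0, _, _, ps => GoodPairs T₁ T₂ ps
  | r + 1, sw, last, ps =>
      ∀ side : Bool, switchCost last side ≤ sw →
        if side then
          ∀ x : T₁.V, ∃ y : T₂.V,
            DupWinsEHRAux T₁ T₂ r (sw - switchCost last side) (some side) ((x, y) :: ps)
        else
          ∀ y : T₂.V, ∃ x : T₁.V,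
            DupWinsEHRAux T₁ T₂ r (sw - switchCost last side) (some side) ((x, y) :: ps)

/-- Duplicator wins the game `EHR[T₁, T₂, s, r]`: `r` rounds, Spoiler may start
on either tree and make at most `s` switches. -/
def DupWinsEHR (T₁ T₂ : RTree) (s r : ℕ) : Prop :=
  DupWinsEHRAux T₁ T₂ r s none [(T₁.root, T₂.root)]

/-! ## The trees `T₁^{(s,k,m)}` and `T₂^{(s,k,m)}` -/

/-- The one-vertex rooted tree. -/
def single : RTree where
  V := PUnit
  root := PUnit.unit
  parent := fun _ => none

/-- Hang the trees `f 0, …, f (n-1)` from a new root: the root of each `f i`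
becomes a child of the new root. -/
def hang (n : ℕ) (f : Fin n → RTree) : RTree where
  V := Unit ⊕ (Σ i : Fin n, (f i).V)
  root := Sum.inl ()
  parent := fun x =>
    match x with
    | Sum.inl _ => none
    | Sum.inr ⟨i, w⟩ =>
      match (f i).parent w with
      | none => some (Sum.inl ())
      | some w' => some (Sum.inr ⟨i, w'⟩)

/-- The pair of trees `(T₁^{(s,k,m)}, T₂^{(s,k,m)})`, indexed by `s` (the
parameter `k` plays no role in the construction).  Conventions for `s = 0`:
`T₁^{(0)}` is a single vertex and `T₂^{(0)}` is a star of `m` childless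
children.  For `s ≥ 1`: in `T₁^{(s+1)}` the root has `m+1` children, from each
of which hangs a copy of `T₂^{(s)}`; in `T₂^{(s+1)}` the root has `m+1`
children, from `m` of which hangs a copy of `T₂^{(s)}` and from the remaining
one hangs a copy of `T₁^{(s)}`. -/
def TreePair (m : ℕ) : ℕ → RTree × RTree
  | 0 => (single, hang m fun _ => single)
  | s + 1 =>
      (hang (m + 1) fun _ => (TreePair m s).2,
       hang (m + 1) fun i => if i.1 = m then (TreePair m s).1 else (TreePair m s).2)

/-- The tree `T₁^{(s,k,m)}`. -/
def Tree1 (s k m : ℕ) : RTree := (TreePair m s).1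

/-- The tree `T₂^{(s,k,m)}`. -/
def Tree2 (s k m : ℕ) : RTree := (TreePair m s).2

/-!
Below the two roots, Duplicator maintains a matching between the children in whose subtrees
moves have been played, together with a winning position of an auxiliary game in each pair of
matched subtrees. A move in an unmatched subtree is matched with a fresh child on the other
side: at most `m` moves are made and each root has `m + 1` children, so a fresh copy of
`T₂^{(s-1)}` is always at hand and Duplicator can copy Spoiler's moves, except when Spoiler
enters the one copy of `T₁^{(s-1)}` in `T₂^{(s)}`. He can do so only in a batch played on
`T₂^{(s)}`, so at most `s - 1` batches remain, the first of them on `T₁^{(s-1)}`, and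
Duplicator wins there by induction on `s`. The induction runs over all schedules of at most
`s` batches with at most `m` moves in total.
-/

section Game

variable {T₁ T₂ : RTree}

theorem dupWinsSched_nil {side : Bool} {ps : List (T₁.V × T₂.V)} :
    DupWinsSched T₁ T₂ [] side ps ↔ GoodPairs T₁ T₂ ps := by
  rw [DupWinsSched]

theorem dupWinsSched_zero_cons {rest : List ℕ} {side : Bool} {ps : List (T₁.V × T₂.V)} :
    DupWinsSched T₁ T₂ (0 :: rest) side ps ↔ DupWinsSched T₁ T₂ rest (!side) ps := by
  rw [DupWinsSched]

theorem dupWinsSched_succ_cons_true {k : ℕ} {rest : List ℕ} {ps : List (T₁.V × T₂.V)} :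
    DupWinsSched T₁ T₂ ((k + 1) :: rest) true ps ↔
      ∀ x, ∃ y, DupWinsSched T₁ T₂ (k :: rest) true ((x, y) :: ps) := by
  rw [DupWinsSched]; rfl

theorem dupWinsSched_succ_cons_false {k : ℕ} {rest : List ℕ} {ps : List (T₁.V × T₂.V)} :
    DupWinsSched T₁ T₂ ((k + 1) :: rest) false ps ↔
      ∀ y, ∃ x, DupWinsSched T₁ T₂ (k :: rest) false ((x, y) :: ps) := by
  rw [DupWinsSched]; rfl

theorem dupWinsSched_of_invariant (I : List ℕ → Bool → List (T₁.V × T₂.V) → Prop)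
    (nil : ∀ side ps, I [] side ps → GoodPairs T₁ T₂ ps)
    (switch : ∀ rest side ps, I (0 :: rest) side ps → I rest (!side) ps)
    (left : ∀ k rest ps, I ((k + 1) :: rest) true ps →
      ∀ x, ∃ y, I (k :: rest) true ((x, y) :: ps))
    (right : ∀ k rest ps, I ((k + 1) :: rest) false ps →
      ∀ y, ∃ x, I (k :: rest) false ((x, y) :: ps))
    (sched : List ℕ) (side : Bool) (ps : List (T₁.V × T₂.V)) (h : I sched side ps) :
    DupWinsSched T₁ T₂ sched side ps := by
  induction sched generalizing side ps with
  | nil => exact dupWinsSched_nil.2 (nil side ps h)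
  | cons a rest ih =>
    induction a generalizing ps with
    | zero => exact dupWinsSched_zero_cons.2 (ih _ _ (switch rest side ps h))
    | succ k ihk =>
      cases side
      · exact dupWinsSched_succ_cons_false.2 fun y => (right k rest ps h y).imp fun _ => ihk _
      · exact dupWinsSched_succ_cons_true.2 fun x => (left k rest ps h x).imp fun _ => ihk _

theorem DupWinsSched.mono {sched : List ℕ} {side : Bool} {ps qs : List (T₁.V × T₂.V)}
    (hsub : ps ⊆ qs) (h : DupWinsSched T₁ T₂ sched side qs) :
    DupWinsSched T₁ T₂ sched side ps := by
  refine dupWinsSched_of_invariant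
    (fun sched side ps => ∃ qs, ps ⊆ qs ∧ DupWinsSched T₁ T₂ sched side qs)
    ?_ ?_ ?_ ?_ sched side ps ⟨qs, hsub, h⟩
  · rintro side ps ⟨qs, hsub, h⟩ p hp q hq
    exact dupWinsSched_nil.1 h p (hsub hp) q (hsub hq)
  · rintro rest side ps ⟨qs, hsub, h⟩
    exact ⟨qs, hsub, dupWinsSched_zero_cons.1 h⟩
  · rintro k rest ps ⟨qs, hsub, h⟩ x
    obtain ⟨y, hy⟩ := dupWinsSched_succ_cons_true.1 h x
    exact ⟨y, _, List.cons_subset_cons _ hsub, hy⟩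
  · rintro k rest ps ⟨qs, hsub, h⟩ y
    obtain ⟨x, hx⟩ := dupWinsSched_succ_cons_false.1 h y
    exact ⟨x, _, List.cons_subset_cons _ hsub, hx⟩

theorem DupWinsSched.of_succ {k : ℕ} {rest : List ℕ} {side : Bool} {ps : List (T₁.V × T₂.V)}
    (h : DupWinsSched T₁ T₂ ((k + 1) :: rest) side ps) :
    DupWinsSched T₁ T₂ (k :: rest) side ps := by
  cases side
  · obtain ⟨x, hx⟩ := dupWinsSched_succ_cons_false.1 h T₂.root
    exact hx.mono (List.subset_cons_self _ _)
  · obtain ⟨y, hy⟩ := dupWinsSched_succ_cons_true.1 h T₁.root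
    exact hy.mono (List.subset_cons_self _ _)

theorem DupWinsSched.swap {sched : List ℕ} {side : Bool} {ps : List (T₁.V × T₂.V)}
    (h : DupWinsSched T₁ T₂ sched side ps) :
    DupWinsSched T₂ T₁ sched (!side) (ps.map Prod.swap) := by
  refine dupWinsSched_of_invariant
    (fun sched side qs => DupWinsSched T₁ T₂ sched (!side) (qs.map Prod.swap))
    ?_ ?_ ?_ ?_ sched (!side) _ (by simpa using h)
  · intro side qs h p hp q hq
    have hgood := dupWinsSched_nil.1 h
    obtain ⟨hparent, heq⟩ := hgood p.swap (List.mem_map_of_mem hp) q.swap (List.mem_map_of_mem hq)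
    exact ⟨hparent.symm, heq.symm⟩
  · intro rest side qs h
    simpa using dupWinsSched_zero_cons.1 h
  · intro k rest qs h x
    exact dupWinsSched_succ_cons_false.1 h x
  · intro k rest qs h y
    exact dupWinsSched_succ_cons_true.1 h y

theorem dupWinsSched_self (T : RTree) (sched : List ℕ) (side : Bool) :
    DupWinsSched T T sched side [(T.root, T.root)] := by
  refine dupWinsSched_of_invariant (fun _ _ ps => ∀ p ∈ ps, p.1 = p.2)
    ?_ ?_ ?_ ?_ sched side _ (by simp)
  · intro side ps h p hp q hq
    rw [h p hp, h q hq]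
    exact ⟨Iff.rfl, Iff.rfl⟩
  · exact fun _ _ _ h => h
  · intro k rest ps h x
    exact ⟨x, by simpa using h⟩
  · intro k rest ps h y
    exact ⟨y, by simpa using h⟩

end Game

def RTree.IsRooted (T : RTree) : Prop := ∀ v, T.parent v = none ↔ v = T.root

theorem isRooted_single : RTree.IsRooted single := by
  intro v
  simp only [single, true_iff]
  rfl

section Hang

variable {n : ℕ}

theorem isRooted_hang (f : Fin n → RTree) : RTree.IsRooted (hang n f) := by
  rintro (u | ⟨i, w⟩)
  · simp [hang]
  · cases h : (f i).parent w <;> simp [hang, h]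

theorem hang_parent_inr_eq_root_iff {f : Fin n → RTree} (i : Fin n) (w : (f i).V) :
    (hang n f).parent (Sum.inr ⟨i, w⟩) = some (hang n f).root ↔ (f i).parent w = none := by
  cases h : (f i).parent w <;> simp [hang, h]

theorem hang_parent_inr_eq_inr_iff {f : Fin n → RTree} (i : Fin n) (w w' : (f i).V) :
    (hang n f).parent (Sum.inr ⟨i, w⟩) = some (Sum.inr ⟨i, w'⟩) ↔ (f i).parent w = some w' := by
  cases h : (f i).parent w <;> simp [hang, h]

theorem hang_parent_inr_ne_inr {f : Fin n → RTree} {i i' : Fin n} (hne : i ≠ i')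
    (w : (f i).V) (w' : (f i').V) :
    (hang n f).parent (Sum.inr ⟨i, w⟩) ≠ some (Sum.inr ⟨i', w'⟩) := by
  cases h : (f i).parent w <;> simp [hang, h, hne]

variable {f g : Fin n → RTree}

variable (f g) in
/-- A child `i` of the root of `hang n f` matched with a child `j` of the root of `hang n g`,
together with the position of the game played between the subtrees below them. -/
structure Block where
  i : Fin n
  j : Fin n
  pos : List ((f i).V × (g j).V)

def Block.embed (b : Block f g) (q : (f b.i).V × (g b.j).V) :
    (hang n f).V × (hang n g).V :=
  (Sum.inr ⟨b.i, q.1⟩, Sum.inr ⟨b.j, q.2⟩)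

structure WinningBlocks (ms : List (Block f g)) (sched : List ℕ) (side : Bool)
    (ps : List ((hang n f).V × (hang n g).V)) : Prop where
  nodup_i : (ms.map Block.i).Nodup
  nodup_j : (ms.map Block.j).Nodup
  root_mem : ∀ b ∈ ms, ((f b.i).root, (g b.j).root) ∈ b.pos
  wins : ∀ b ∈ ms, DupWinsSched (f b.i) (g b.j) sched side b.pos
  covers : ∀ p ∈ ps, p = ((hang n f).root, (hang n g).root) ∨ ∃ b ∈ ms, ∃ q ∈ b.pos, p = b.embed q

namespace WinningBlocks

variable {ms : List (Block f g)} {sched : List ℕ} {side : Bool}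
  {ps : List ((hang n f).V × (hang n g).V)}

theorem goodPairs (hf : ∀ i, (f i).IsRooted) (hg : ∀ j, (g j).IsRooted)
    (h : WinningBlocks ms [] side ps) : GoodPairs (hang n f) (hang n g) ps := by
  have hgood (b : Block f g) (hb : b ∈ ms) : GoodPairs (f b.i) (g b.j) b.pos :=
    dupWinsSched_nil.1 (h.wins b hb)
  intro p hp q hq
  rcases h.covers p hp with rfl | ⟨b, hb, ⟨w₁, w₂⟩, hw, rfl⟩ <;>
    rcases h.covers q hq with rfl | ⟨c, hc, ⟨v₁, v₂⟩, hv, rfl⟩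
  · simp [hang]
  · simp [hang, Block.embed]
  · refine ⟨?_, by simp [hang, Block.embed]⟩
    dsimp only [Block.embed]
    rw [hang_parent_inr_eq_root_iff, hang_parent_inr_eq_root_iff, hf, hg]
    exact (hgood b hb _ hw _ (h.root_mem b hb)).2
  · by_cases hbc : b = c
    · subst hbc
      obtain ⟨hparent, heq⟩ := hgood b hb _ hw _ hv
      refine ⟨(hang_parent_inr_eq_inr_iff _ _ _).trans
        (hparent.trans (hang_parent_inr_eq_inr_iff _ _ _).symm), ?_⟩
      simpa [Block.embed, hang] using heq
    · have hi : b.i ≠ c.i := fun e => hbc (List.inj_on_of_nodup_map h.nodup_i hb hc e)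
      have hj : b.j ≠ c.j := fun e => hbc (List.inj_on_of_nodup_map h.nodup_j hb hc e)
      exact ⟨iff_of_false (hang_parent_inr_ne_inr hi _ _) (hang_parent_inr_ne_inr hj _ _),
        by simp [Block.embed, hang, hi, hj]⟩

theorem nil : WinningBlocks [] sched side [((hang n f).root, (hang n g).root)] where
  nodup_i := List.nodup_nil
  nodup_j := List.nodup_nil
  root_mem := by simp
  wins := by simp
  covers p hp := Or.inl (List.mem_singleton.1 hp)

theorem perm {ms' : List (Block f g)} (hperm : ms.Perm ms') (h : WinningBlocks ms sched side ps) :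
    WinningBlocks ms' sched side ps where
  nodup_i := (hperm.map _).nodup_iff.1 h.nodup_i
  nodup_j := (hperm.map _).nodup_iff.1 h.nodup_j
  root_mem b hb := h.root_mem b (hperm.mem_iff.2 hb)
  wins b hb := h.wins b (hperm.mem_iff.2 hb)
  covers p hp := (h.covers p hp).imp_right fun ⟨b, hb, hq⟩ => ⟨b, hperm.mem_iff.1 hb, hq⟩

theorem exists_cons_of_mem {b : Block f g} (h : WinningBlocks ms sched side ps) (hb : b ∈ ms) :
    ∃ ms', WinningBlocks (b :: ms') sched side ps ∧ ms'.length < ms.length := by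
  obtain ⟨l₁, l₂, rfl⟩ := List.append_of_mem hb
  exact ⟨l₁ ++ l₂, h.perm List.perm_middle, by simp⟩

theorem of_zero_cons {rest : List ℕ} (h : WinningBlocks ms (0 :: rest) side ps) :
    WinningBlocks ms rest (!side) ps :=
  { h with wins := fun b hb => dupWinsSched_zero_cons.1 (h.wins b hb) }

theorem cons_root {k : ℕ} {rest : List ℕ} (h : WinningBlocks ms ((k + 1) :: rest) side ps) :
    WinningBlocks ms (k :: rest) side (((hang n f).root, (hang n g).root) :: ps) where
  __ := h
  wins b hb := (h.wins b hb).of_succ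
  covers p hp := by
    rcases List.mem_cons.1 hp with rfl | hp
    · exact Or.inl rfl
    · exact h.covers p hp

theorem cons_block {i j : Fin n} (h : WinningBlocks ms sched side ps) (hi : i ∉ ms.map Block.i)
    (hj : j ∉ ms.map Block.j)
    (hwin : DupWinsSched (f i) (g j) sched side [((f i).root, (g j).root)]) :
    WinningBlocks (⟨i, j, [((f i).root, (g j).root)]⟩ :: ms) sched side ps where
  nodup_i := List.nodup_cons.2 ⟨hi, h.nodup_i⟩
  nodup_j := List.nodup_cons.2 ⟨hj, h.nodup_j⟩
  root_mem := by
    rintro b (_ | ⟨_, hb⟩)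
    exacts [List.mem_singleton_self _, h.root_mem b hb]
  wins := by
    rintro b (_ | ⟨_, hb⟩)
    exacts [hwin, h.wins b hb]
  covers p hp := (h.covers p hp).imp_right fun ⟨b, hb, hq⟩ => ⟨b, List.mem_cons_of_mem _ hb, hq⟩

theorem cons_move {b : Block f g} {k : ℕ} {rest : List ℕ}
    (h : WinningBlocks (b :: ms) ((k + 1) :: rest) side ps) {q : (f b.i).V × (g b.j).V}
    (hq : DupWinsSched (f b.i) (g b.j) (k :: rest) side (q :: b.pos)) :
    WinningBlocks (⟨b.i, b.j, q :: b.pos⟩ :: ms) (k :: rest) side (b.embed q :: ps) where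
  nodup_i := h.nodup_i
  nodup_j := h.nodup_j
  root_mem := by
    rintro c (_ | ⟨_, hc⟩)
    exacts [List.mem_cons_of_mem _ (h.root_mem b List.mem_cons_self),
      h.root_mem c (List.mem_cons_of_mem _ hc)]
  wins := by
    rintro c (_ | ⟨_, hc⟩)
    exacts [hq, (h.wins c (List.mem_cons_of_mem _ hc)).of_succ]
  covers p hp := by
    rcases List.mem_cons.1 hp with rfl | hp
    · exact Or.inr ⟨_, List.mem_cons_self, q, List.mem_cons_self, rfl⟩
    rcases h.covers p hp with rfl | ⟨c, (_ | ⟨_, hc⟩), r, hr, rfl⟩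
    · exact Or.inl rfl
    · exact Or.inr ⟨_, List.mem_cons_self, r, List.mem_cons_of_mem _ hr, rfl⟩
    · exact Or.inr ⟨c, List.mem_cons_of_mem _ hc, r, hr, rfl⟩

end WinningBlocks

end Hang

theorem Fin.exists_notMem_of_length_lt {n : ℕ} {l : List (Fin n)} (h : l.length < n) :
    ∃ x, x ∉ l := by
  obtain ⟨x, -, hx⟩ := Finset.exists_mem_notMem_of_card_lt_card (s := l.toFinset)
    (t := Finset.univ) (by simpa using (List.toFinset_card_le l).trans_lt h)
  exact ⟨x, by simpa using hx⟩

section HangStrategy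

variable {n : ℕ} {B : RTree} {g : Fin n → RTree} {s : ℕ}

variable (B g s) in
/-- Duplicator's invariant in the game on `hang n (fun _ => B)` and `hang n g`, where all the
`g j` but one are copies of `B`. The bound on the number of blocks leaves a fresh child to
match every further move with; the bound on the number of batches makes sure that Spoiler,
who starts on the left, has at most `s` batches left when he first enters the odd subtree
on the right. -/
def HangInvariant (sched : List ℕ) (side : Bool)
    (ps : List ((hang n fun _ => B).V × (hang n g).V)) : Prop :=
  ∃ ms : List (Block (fun _ => B) g), WinningBlocks ms sched side ps ∧
    ms.length + sched.sum < n ∧ sched.length ≤ s + side.toNat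

namespace HangInvariant

variable {k : ℕ} {rest : List ℕ} {side : Bool} {ps : List ((hang n fun _ => B).V × (hang n g).V)}

theorem of_zero_cons (h : HangInvariant B g s (0 :: rest) side ps) :
    HangInvariant B g s rest (!side) ps := by
  obtain ⟨ms, hms, hcount, hlen⟩ := h
  refine ⟨ms, hms.of_zero_cons, by simpa using hcount, ?_⟩
  simp only [List.length_cons] at hlen
  cases side <;>
    simp only [Bool.not_true, Bool.not_false, Bool.toNat_true, Bool.toNat_false] at hlen ⊢ <;>
    omega

theorem exists_response_left {j₀ : Fin n} (hg : ∀ j, j ≠ j₀ → g j = B)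
    (h : HangInvariant B g s ((k + 1) :: rest) true ps) (x : (hang n fun _ => B).V) :
    ∃ y, HangInvariant B g s (k :: rest) true ((x, y) :: ps) := by
  obtain ⟨ms, hms, hcount, hlen⟩ := h
  simp only [List.sum_cons] at hcount
  rcases x with ⟨⟩ | ⟨i, w⟩
  · exact ⟨(hang n g).root, ms, hms.cons_root, by simp only [List.sum_cons]; omega,
    by simpa using hlen⟩
  obtain ⟨b, ms', hb, rfl, hms'⟩ : ∃ b ms', WinningBlocks (b :: ms') ((k + 1) :: rest) true ps ∧
      b.i = i ∧ ms'.length ≤ ms.length := by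
    by_cases hex : ∃ b ∈ ms, b.i = i
    · obtain ⟨b, hb, rfl⟩ := hex
      obtain ⟨ms', hms', hlt⟩ := hms.exists_cons_of_mem hb
      exact ⟨b, ms', hms', rfl, hlt.le⟩
    obtain ⟨j, hj⟩ := Fin.exists_notMem_of_length_lt (l := j₀ :: ms.map Block.j)
      (by simp only [List.length_cons, List.length_map]; omega)
    rw [List.mem_cons, not_or] at hj
    refine ⟨⟨i, j, _⟩, ms, hms.cons_block (by simpa using hex) hj.2 ?_, rfl, le_rfl⟩
    rw [hg j hj.1]
    exact dupWinsSched_self B _ _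
  obtain ⟨y, hy⟩ := dupWinsSched_succ_cons_true.1 (hb.wins b List.mem_cons_self) w
  exact ⟨Sum.inr ⟨b.j, y⟩, _, hb.cons_move hy,
    by simp only [List.length_cons, List.sum_cons]; omega, by simpa using hlen⟩

theorem exists_response_right {j₀ : Fin n} (hg : ∀ j, j ≠ j₀ → g j = B)
    (hA : ∀ L : List ℕ, L.length ≤ s → L.sum < n →
      DupWinsSched B (g j₀) L false [(B.root, (g j₀).root)])
    (h : HangInvariant B g s ((k + 1) :: rest) false ps) (y : (hang n g).V) :
    ∃ x, HangInvariant B g s (k :: rest) false ((x, y) :: ps) := by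
  obtain ⟨ms, hms, hcount, hlen⟩ := h
  simp only [List.sum_cons] at hcount
  rcases y with ⟨⟩ | ⟨j, w⟩
  · exact ⟨(hang n fun _ => B).root, ms, hms.cons_root, by simp only [List.sum_cons]; omega,
    by simpa using hlen⟩
  obtain ⟨b, ms', hb, rfl, hms'⟩ : ∃ b ms', WinningBlocks (b :: ms') ((k + 1) :: rest) false ps ∧
      b.j = j ∧ ms'.length ≤ ms.length := by
    by_cases hex : ∃ b ∈ ms, b.j = j
    · obtain ⟨b, hb, rfl⟩ := hex
      obtain ⟨ms', hms', hlt⟩ := hms.exists_cons_of_mem hb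
      exact ⟨b, ms', hms', rfl, hlt.le⟩
    obtain ⟨i, hi⟩ := Fin.exists_notMem_of_length_lt (l := ms.map Block.i)
      (by simp only [List.length_map]; omega)
    refine ⟨⟨i, j, _⟩, ms, hms.cons_block hi (by simpa using hex) ?_, rfl, le_rfl⟩
    by_cases hj : j = j₀
    · subst hj
      exact hA _ (by simpa using hlen) (by simp only [List.sum_cons]; omega)
    · rw [hg j hj]
      exact dupWinsSched_self B _ _
  obtain ⟨x, hx⟩ := dupWinsSched_succ_cons_false.1 (hb.wins b List.mem_cons_self) w
  exact ⟨Sum.inr ⟨b.i, x⟩, _, hb.cons_move hx,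
    by simp only [List.length_cons, List.sum_cons]; omega, by simpa using hlen⟩

end HangInvariant

theorem dupWinsSched_hang {j₀ : Fin n} (hB : B.IsRooted) (hg₀ : (g j₀).IsRooted)
    (hg : ∀ j, j ≠ j₀ → g j = B)
    (hA : ∀ L : List ℕ, L.length ≤ s → L.sum < n →
      DupWinsSched B (g j₀) L false [(B.root, (g j₀).root)])
    (L : List ℕ) (hlen : L.length ≤ s + 1) (hsum : L.sum < n) :
    DupWinsSched (hang n fun _ => B) (hang n g) L true
      [((hang n fun _ => B).root, (hang n g).root)] := by
  have hg_rooted j : (g j).IsRooted := by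
    by_cases hj : j = j₀
    · exact hj ▸ hg₀
    · exact hg j hj ▸ hB
  refine dupWinsSched_of_invariant (HangInvariant B g s)
    (fun _ _ ⟨_, hms, _⟩ => hms.goodPairs (fun _ => hB) hg_rooted)
    (fun _ _ _ => HangInvariant.of_zero_cons)
    (fun _ _ _ h => h.exists_response_left hg)
    (fun _ _ _ h => h.exists_response_right hg hA)
    L true _ ⟨[], WinningBlocks.nil, by simpa using hsum, by simpa using hlen⟩

end HangStrategy

theorem isRooted_treePair (m s : ℕ) : (TreePair m s).1.IsRooted ∧ (TreePair m s).2.IsRooted := by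
  cases s
  · exact ⟨isRooted_single, isRooted_hang _⟩
  · exact ⟨isRooted_hang _, isRooted_hang _⟩

theorem dupWinsSched_treePair (m : ℕ) : ∀ (s : ℕ) (L : List ℕ), L.length ≤ s → L.sum ≤ m →
    DupWinsSched (TreePair m s).1 (TreePair m s).2 L true
      [((TreePair m s).1.root, (TreePair m s).2.root)]
  | 0, [], _, _ => by
    refine dupWinsSched_nil.2 fun p hp q hq => ?_
    rw [List.mem_singleton] at hp hq
    subst hp hq
    constructor <;> simp [TreePair, single, hang]
  | s + 1, L, hlen, hsum => by
    refine dupWinsSched_hang (j₀ := Fin.last m) (isRooted_treePair m s).2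
      (by simpa using (isRooted_treePair m s).1) (fun j hj => if_neg fun h => hj (Fin.ext h))
      (fun L hlen hsum => ?_) L hlen (by omega)
    rw [if_pos rfl]
    simpa using (dupWinsSched_treePair m s L hlen (by omega)).swap

theorem dup_wins_ehr_trees_start_T1_general (s k m : ℕ) (hm : s * k ≤ m) :
    DupWinsSched (Tree1 s k m) (Tree2 s k m) (List.replicate s k) true
      [((Tree1 s k m).root, (Tree2 s k m).root)] :=
  dupWinsSched_treePair m s _ (by simp) (by simpa using hm)

/-- For every positive `s`, positive `k` and `m ≥ s·k`, Duplicator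
wins `ehr[T₁^{(s,k,m)}, T₂^{(s,k,m)}, s; k]` when Spoiler starts playing on
`T₁^{(s,k,m)}`. -/
theorem dup_wins_ehr_trees_start_T1 (s k m : ℕ) (hs : 0 < s) (hk : 0 < k) (hm : s * k ≤ m) :
    DupWinsSched (Tree1 s k m) (Tree2 s k m) (List.replicate s k) true
      [((Tree1 s k m).root, (Tree2 s k m).root)] :=
  dup_wins_ehr_trees_start_T1_general s k m hm
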